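/- arXiv:0909.1859 — 4 statements merged into one kernel-verified Lean document; each statement's English description precedes it below -/
import Mathlib

section
/- Let A, B, C, D be four points in Euclidean 3-space that are not coplanar (i.e., they are affinely independent). If the area of triangle ABC equals the area of triangle ABD, and the area of triangle ACD equals the area of triangle BCD, then dist A C = dist B D and dist B C = dist A D. -/
/-! Put `a = B - A`, `c = C - A`, `d = D - A`. Four times the squared area of a triangle is the
Gram determinant `G` of two of its edge vectors, so both hypotheses are polynomial identities in
the inner products of `a`, `c`, `d`, and together they force `⟪a, c + d - a⟫ * G(a, c - d) = 0`.
If the first factor vanishes (the segment joining the midpoints of `AB` and `CD` is perpendicular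
to `AB`), the equality of the areas over `AB` already gives the two equalities of distances. If
the second factor vanishes, `CD` is parallel to `AB`, which is impossible for a non-degenerate
tetrahedron. -/

/-- The area of the triangle `XYZ`: half the product of the lengths of the
sides `XY`, `XZ` and the sine of the angle at `X`. -/
noncomputable def triArea (X Y Z : EuclideanSpace ℝ (Fin 3)) : ℝ :=
  dist X Y * dist X Z * Real.sin (EuclideanGeometry.angle Y X Z) / 2

open RealInnerProductSpace InnerProductGeometry

section Gram

variable {F : Type*} [NormedAddCommGroup F] [InnerProductSpace ℝ F]

def gramDet (u v : F) : ℝ := ‖u‖ ^ 2 * ‖v‖ ^ 2 - ⟪u, v⟫ ^ 2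

theorem sq_norm_mul_norm_mul_sin_angle (u v : F) :
    (‖u‖ * ‖v‖ * Real.sin (angle u v)) ^ 2 = gramDet u v := by
  have hcos := cos_angle_mul_norm_mul_norm u v
  rw [gramDet, ← hcos]
  linear_combination (‖u‖ * ‖v‖) ^ 2 * Real.sin_sq_add_cos_sq (angle u v)

theorem norm_sq_smul_sub_inner_smul (a v : F) :
    ‖‖a‖ ^ 2 • v - ⟪a, v⟫ • a‖ ^ 2 = ‖a‖ ^ 2 * gramDet a v := by
  rw [norm_sub_sq_real, norm_smul, norm_smul, inner_smul_left, inner_smul_right,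
    real_inner_comm a v, gramDet, Real.norm_eq_abs, Real.norm_eq_abs, abs_sq]
  simp only [mul_pow, sq_abs, conj_trivial]
  ring

theorem exists_eq_smul_of_gramDet_eq_zero {a v : F} (ha : a ≠ 0) (h : gramDet a v = 0) :
    ∃ t : ℝ, v = t • a := by
  have ha2 : ‖a‖ ^ 2 ≠ 0 := by positivity
  refine ⟨⟪a, v⟫ / ‖a‖ ^ 2, ?_⟩
  have hv : ‖a‖ ^ 2 • v - ⟪a, v⟫ • a = 0 := by
    rw [← norm_eq_zero, ← sq_eq_zero_iff, norm_sq_smul_sub_inner_smul, h, mul_zero]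
  rw [div_eq_inv_mul, mul_smul, ← sub_eq_zero.mp hv, smul_smul, inv_mul_cancel₀ ha2, one_smul]

variable {a c d : F}

theorem inner_mul_gramDet_sub_eq_zero (e1 : gramDet a c = gramDet a d)
    (e2 : gramDet c d = gramDet (c - a) (d - a)) :
    ⟪a, c + d - a⟫ * gramDet a (c - d) = 0 := by
  simp only [gramDet, norm_sub_sq_real, inner_sub_left, inner_sub_right, inner_add_right,
    real_inner_self_eq_norm_sq] at e1 e2 ⊢
  rw [real_inner_comm a c, real_inner_comm a d] at *
  linear_combination (⟪a, c⟫ - ⟪a, d⟫) * e1 + ‖a‖ ^ 2 * e2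

theorem norm_eq_norm_sub_of_inner_eq_zero (ha : a ≠ 0) (e1 : gramDet a c = gramDet a d)
    (hx : ⟪a, c + d - a⟫ = 0) :
    ‖c‖ = ‖d - a‖ ∧ ‖c - a‖ = ‖d‖ := by
  simp only [gramDet] at e1
  rw [inner_sub_right, inner_add_right, real_inner_self_eq_norm_sq] at hx
  have hd : ‖d‖ ^ 2 - ‖c‖ ^ 2 = ⟪a, d⟫ - ⟪a, c⟫ :=
    mul_left_cancel₀ (by positivity : ‖a‖ ^ 2 ≠ 0)
      (by linear_combination -e1 + (⟪a, d⟫ - ⟪a, c⟫) * hx)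
  constructor <;> rw [← pow_left_inj₀ (norm_nonneg _) (norm_nonneg _) two_ne_zero,
    norm_sub_sq_real, real_inner_comm a]
  · linear_combination -hd + hx
  · linear_combination -hd - hx

end Gram

theorem AffineIndependent.sub_ne_smul_sub {k V : Type*} [Ring k] [Nontrivial k]
    [AddCommGroup V] [Module k V] {A B C D : V} (h : AffineIndependent k ![A, B, C, D])
    (t : k) : C - D ≠ t • (B - A) := by
  intro hCD
  have hw : ∑ i, ![t, -t, 1, -1] i • ![A, B, C, D] i = 0 := by
    simp only [Fin.sum_univ_four, Matrix.cons_val_zero, Matrix.cons_val_one, Matrix.cons_val,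
      neg_smul, one_smul]
    calc _ = C - D - t • (B - A) := by rw [smul_sub]; abel
      _ = 0 := sub_eq_zero.mpr hCD
  simpa using affineIndependent_iff.mp h Finset.univ _ (by simp [Fin.sum_univ_four]) hw 2
    (Finset.mem_univ _)

theorem four_mul_triArea_sq (X Y Z : EuclideanSpace ℝ (Fin 3)) :
    4 * triArea X Y Z ^ 2 = gramDet (Y - X) (Z - X) := by
  rw [← sq_norm_mul_norm_mul_sin_angle, triArea, EuclideanGeometry.angle, dist_eq_norm',
    dist_eq_norm', vsub_eq_sub, vsub_eq_sub]
  ring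

theorem stmt_0 (A B C D : EuclideanSpace ℝ (Fin 3))
    (hind : AffineIndependent ℝ ![A, B, C, D])
    (h1 : triArea A B C = triArea A B D)
    (h2 : triArea A C D = triArea B C D) :
    dist A C = dist B D ∧ dist B C = dist A D := by
  have hAB : B - A ≠ 0 := by
    simpa [sub_eq_zero] using (hind.injective.ne (show (1 : Fin 4) ≠ 0 by decide))
  have e1 : gramDet (B - A) (C - A) = gramDet (B - A) (D - A) := by
    rw [← four_mul_triArea_sq, ← four_mul_triArea_sq, h1]
  have e2 : gramDet (C - A) (D - A) = gramDet (C - A - (B - A)) (D - A - (B - A)) := by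
    rw [sub_sub_sub_cancel_right, sub_sub_sub_cancel_right, ← four_mul_triArea_sq,
      ← four_mul_triArea_sq, h2]
  rcases mul_eq_zero.mp (inner_mul_gramDet_sub_eq_zero e1 e2) with hx | hpar
  · obtain ⟨hC, hD⟩ := norm_eq_norm_sub_of_inner_eq_zero hAB e1 hx
    rw [sub_sub_sub_cancel_right] at hC hD
    rw [dist_eq_norm', dist_eq_norm', dist_eq_norm', dist_eq_norm']
    exact ⟨hC, hD⟩
  · obtain ⟨t, ht⟩ := exists_eq_smul_of_gramDet_eq_zero hAB hpar
    rw [sub_sub_sub_cancel_right] at ht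
    exact absurd ht (hind.sub_ne_smul_sub t)
end

section
/- Let A, B, C, D be four affinely independent points in Euclidean 3-space such that the four triangles ABC, ABD, ACD, BCD all have the same area. Then every two of these four triangles are congruent: for any two of the triples {A,B,C}, {A,B,D}, {A,C,D}, {B,C,D} there is an isometry of ℝ³ mapping the vertex set of one onto the vertex set of the other. -/
/-- Two triangles (given as vertex sets) are congruent if some isometry of the
space maps the vertex set of one onto the vertex set of the other. -/
def TriCongruent (s t : Set (EuclideanSpace ℝ (Fin 3))) : Prop :=
  ∃ f : EuclideanSpace ℝ (Fin 3) ≃ᵢ EuclideanSpace ℝ (Fin 3), f '' s = t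

/-!
Let `p`, `q`, `r` be the bimedians of the tetrahedron (the vectors joining midpoints of opposite
edges), so that `B - A = q + r`, `C - A = p + r`, `D - A = p + q`: the tetrahedron is inscribed
in the parallelepiped spanned by `p`, `q`, `r`. Four times a squared face area is a 2 × 2 Gram
determinant, and by Lagrange's identity the four of them are `‖u ± v ± w‖²` for the cross
products `u = q × r`, `v = r × p`, `w = p × q`. Equal areas therefore make `u`, `v`, `w` pairwise
orthogonal, i.e. the off-diagonal cofactors of the (positive definite) Gram matrix of `p`, `q`, `r`
vanish, which forces `p`, `q`, `r` to be pairwise orthogonal. Then opposite edges have equal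
length (`‖q + r‖ = ‖q - r‖`, ...), and the half-turn about each bimedian swaps the endpoints of
the two edges it joins; these three isometries carry the face `ABC` onto the other faces.
-/

open EuclideanGeometry InnerProductGeometry Matrix AffineSubspace
open scoped RealInnerProductSpace

/-- The three equations say that the off-diagonal cofactors of the symmetric matrix
`!![P, c, b; c, Q, a; b, a, R]` vanish. -/
lemma offDiag_eq_zero_of_cofactors_eq_zero {P Q R a b c : ℝ} (hP : P ≠ 0) (hQ : Q ≠ 0)
    (hR : R ≠ 0) (hQR : Q * R - a ^ 2 ≠ 0) (e₁ : a * b = c * R) (e₂ : c * a = Q * b)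
    (e₃ : b * c = a * P) :
    a = 0 ∧ b = 0 ∧ c = 0 := by
  have hbc : b * c = 0 := by
    have : b * c * (Q * R - a ^ 2) = 0 := by linear_combination (-(c * R)) * e₂ - (c * a) * e₁
    exact (mul_eq_zero.mp this).resolve_right hQR
  have ha : a = 0 := by
    have : a * P = 0 := by rw [← e₃, hbc]
    exact (mul_eq_zero.mp this).resolve_right hP
  refine ⟨ha, ?_, ?_⟩
  · have : Q * b = 0 := by rw [← e₂, ha, mul_zero]
    exact (mul_eq_zero.mp this).resolve_left hQ
  · have : c * R = 0 := by rw [← e₁, ha, zero_mul]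
    exact (mul_eq_zero.mp this).resolve_right hR

section InnerProductSpace

variable {V : Type*} [NormedAddCommGroup V] [InnerProductSpace ℝ V]

lemma sq_norm_mul_norm_mul_sin_angle_s1 (x y : V) :
    (‖x‖ * ‖y‖ * Real.sin (angle x y)) ^ 2 = (gram ℝ ![x, y]).det := by
  have hnonneg : 0 ≤ ⟪x, x⟫ * ⟪y, y⟫ - ⟪x, y⟫ * ⟪x, y⟫ := by
    linarith [real_inner_mul_inner_self_le x y]
  rw [mul_comm _ (Real.sin _), sin_angle_mul_norm_mul_norm, Real.sq_sqrt hnonneg, det_fin_two]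
  simp [real_inner_comm x y]

lemma inner_eq_zero_of_det_gram_eq {p q r : V} (hind : LinearIndependent ℝ ![p, q, r])
    (h₁ : (gram ℝ ![q + r, p + r]).det = (gram ℝ ![q + r, p + q]).det)
    (h₂ : (gram ℝ ![q + r, p + r]).det = (gram ℝ ![p + r, p + q]).det)
    (h₃ : (gram ℝ ![q + r, p + r]).det = (gram ℝ ![p - q, p - r]).det) :
    ⟪p, q⟫ = 0 ∧ ⟪q, r⟫ = 0 ∧ ⟪p, r⟫ = 0 := by
  have hp : ⟪p, p⟫ ≠ 0 := inner_self_ne_zero.mpr (by simpa using hind.ne_zero 0)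
  have hq : ⟪q, q⟫ ≠ 0 := inner_self_ne_zero.mpr (by simpa using hind.ne_zero 1)
  have hr : ⟪r, r⟫ ≠ 0 := inner_self_ne_zero.mpr (by simpa using hind.ne_zero 2)
  have hdet : (gram ℝ ![q, r]).det ≠ 0 :=
    det_gram_ne_zero_iff_linearIndependent.mpr (hind.comp Fin.succ (Fin.succ_injective _))
  simp only [det_fin_two, gram_apply, cons_val_zero, cons_val_one, inner_add_left,
    inner_add_right, inner_sub_left, inner_sub_right, real_inner_comm p q, real_inner_comm p r,
    real_inner_comm q r] at h₁ h₂ h₃ hdet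
  obtain ⟨hqr, hpr, hpq⟩ := offDiag_eq_zero_of_cofactors_eq_zero hp hq hr (a := ⟪q, r⟫)
    (b := ⟪p, r⟫) (c := ⟪p, q⟫) (by simpa [sq] using hdet)
    (by linear_combination (h₁ + h₂ - h₃) / 8) (by linear_combination (-h₁ + h₂ - h₃) / 8)
    (by linear_combination (h₁ - h₂ - h₃) / 8)
  exact ⟨hpq, hqr, hpr⟩

end InnerProductSpace

lemma triArea_sq (X Y Z : EuclideanSpace ℝ (Fin 3)) :
    triArea X Y Z ^ 2 = (gram ℝ ![Y - X, Z - X]).det / 4 := by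
  rw [← sq_norm_mul_norm_mul_sin_angle_s1, triArea, EuclideanGeometry.angle, dist_eq_norm',
    dist_eq_norm']
  simp only [vsub_eq_sub]
  ring

lemma det_gram_eq_of_triArea_eq {X Y Z X' Y' Z' : EuclideanSpace ℝ (Fin 3)}
    (h : triArea X Y Z = triArea X' Y' Z') :
    (gram ℝ ![Y - X, Z - X]).det = (gram ℝ ![Y' - X', Z' - X']).det := by
  have := congrArg (· ^ 2) h
  simp only [triArea_sq] at this
  linarith

lemma AffineIndependent.linearIndependent_bimedians {V : Type*} [AddCommGroup V] [Module ℝ V]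
    {A B C D : V} (h : AffineIndependent ℝ ![A, B, C, D]) :
    LinearIndependent ℝ ![(2 : ℝ)⁻¹ • (C + D - A - B), (2 : ℝ)⁻¹ • (B + D - A - C),
      (2 : ℝ)⁻¹ • (B + C - A - D)] := by
  rw [Fintype.linearIndependent_iff]
  intro g hg
  rw [Fin.sum_univ_three] at hg
  simp only [cons_val_zero, cons_val_one, cons_val_two, head_cons, tail_cons] at hg
  have hw := h.eq_zero_of_sum_eq_zero (s := Finset.univ)
    (w := ![-(g 0 + g 1 + g 2), g 1 + g 2 - g 0, g 0 + g 2 - g 1, g 0 + g 1 - g 2])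
    (by
      simp only [Fin.sum_univ_four, cons_val_zero, cons_val_one, cons_val_two, cons_val_three,
        head_cons, tail_cons]
      ring)
    (by
      simp only [Fin.sum_univ_four, cons_val_zero, cons_val_one, cons_val_two, cons_val_three,
        head_cons, tail_cons]
      linear_combination (norm := module) (2 : ℝ) • hg)
  have h0 := hw 0 (Finset.mem_univ _)
  have h1 := hw 1 (Finset.mem_univ _)
  have h2 := hw 2 (Finset.mem_univ _)
  have h3 := hw 3 (Finset.mem_univ _)
  simp only [cons_val_zero, cons_val_one, cons_val_two, cons_val_three, head_cons,
    tail_cons] at h0 h1 h2 h3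
  intro i
  fin_cases i <;> dsimp <;> linarith

theorem dist_eq_dist_of_triArea_eq {A B C D : EuclideanSpace ℝ (Fin 3)}
    (hind : AffineIndependent ℝ ![A, B, C, D])
    (h₁ : triArea A B C = triArea A B D) (h₂ : triArea A B C = triArea A C D)
    (h₃ : triArea A B C = triArea B C D) :
    dist A B = dist C D ∧ dist A C = dist B D ∧ dist A D = dist B C := by
  set p := (2 : ℝ)⁻¹ • (C + D - A - B) with hp
  set q := (2 : ℝ)⁻¹ • (B + D - A - C) with hq
  set r := (2 : ℝ)⁻¹ • (B + C - A - D) with hr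
  have hBA : B - A = q + r := by rw [hq, hr]; module
  have hCA : C - A = p + r := by rw [hp, hr]; module
  have hDA : D - A = p + q := by rw [hp, hq]; module
  have hCB : C - B = p - q := by rw [hp, hq]; module
  have hDB : D - B = p - r := by rw [hp, hr]; module
  have hDC : D - C = q - r := by rw [hq, hr]; module
  have hABC_ABD := det_gram_eq_of_triArea_eq h₁
  have hABC_ACD := det_gram_eq_of_triArea_eq h₂
  have hABC_BCD := det_gram_eq_of_triArea_eq h₃
  rw [hBA, hCA, hDA] at hABC_ABD hABC_ACD
  rw [hBA, hCA, hCB, hDB] at hABC_BCD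
  obtain ⟨hpq, hqr, hpr⟩ := inner_eq_zero_of_det_gram_eq hind.linearIndependent_bimedians
    hABC_ABD hABC_ACD hABC_BCD
  simp only [dist_eq_norm', hBA, hCA, hDA, hCB, hDB, hDC]
  exact ⟨(norm_sub_eq_norm_add (inner_eq_zero_symm.mp hqr)).symm,
    (norm_sub_eq_norm_add (inner_eq_zero_symm.mp hpr)).symm,
    (norm_sub_eq_norm_add (inner_eq_zero_symm.mp hpq)).symm⟩

section EuclideanAffineSpace

variable {V P : Type*} [NormedAddCommGroup V] [InnerProductSpace ℝ V] [MetricSpace P]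
  [NormedAddTorsor V P]

lemma reflection_eq_of_midpoint_mem {s : AffineSubspace ℝ P} [Nonempty s]
    [s.direction.HasOrthogonalProjection] {X Y : P} (hmid : midpoint ℝ X Y ∈ s)
    (hXY : Y -ᵥ X ∈ s.directionᗮ) : reflection s X = Y := by
  have hX : X -ᵥ midpoint ℝ X Y ∈ s.directionᗮ := by
    rw [left_vsub_midpoint, ← neg_vsub_eq_vsub_rev]
    exact Submodule.smul_mem _ _ (Submodule.neg_mem _ hXY)
  rw [← vsub_vadd X (midpoint ℝ X Y), reflection_orthogonal_vadd hmid hX, neg_vsub_eq_vsub_rev,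
    midpoint_vsub_left, ← right_vsub_midpoint, vsub_vadd]

lemma dist_midpoint_eq_of_dist_eq {A B C D : P} (hAC : dist A C = dist B D)
    (hAD : dist A D = dist B C) : dist A (midpoint ℝ C D) = dist B (midpoint ℝ C D) := by
  have hA := dist_sq_add_dist_sq_eq_two_mul_dist_midpoint_sq_add_half_dist_sq A C D
  have hB := dist_sq_add_dist_sq_eq_two_mul_dist_midpoint_sq_add_half_dist_sq B C D
  rw [hAC, hAD] at hA
  nlinarith [dist_nonneg (x := A) (y := midpoint ℝ C D),
    dist_nonneg (x := B) (y := midpoint ℝ C D)]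

theorem exists_affineIsometryEquiv_swap_of_dist_eq {A B C D : P} (hAC : dist A C = dist B D)
    (hAD : dist A D = dist B C) :
    ∃ f : P ≃ᵃⁱ[ℝ] P, f A = B ∧ f B = A ∧ f C = D ∧ f D = C := by
  set M := midpoint ℝ A B
  set N := midpoint ℝ C D
  have hN : N ∈ perpBisector A B := by
    rw [mem_perpBisector_iff_dist_eq']
    exact dist_midpoint_eq_of_dist_eq hAC hAD
  have hM : M ∈ perpBisector C D := by
    rw [mem_perpBisector_iff_dist_eq']
    exact dist_midpoint_eq_of_dist_eq (by rw [dist_comm, hAC, dist_comm])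
      (by rw [dist_comm, ← hAD, dist_comm])
  set L := line[ℝ, M, N]
  have hdir : L.directionᗮ = (ℝ ∙ (N -ᵥ M))ᗮ := by rw [direction_affineSpan, vectorSpan_pair_rev]
  have hAB : reflection L A = B := by
    refine reflection_eq_of_midpoint_mem (left_mem_affineSpan_pair ℝ M N) ?_
    rw [hdir, Submodule.mem_orthogonal_singleton_iff_inner_right]
    exact mem_perpBisector_iff_inner_eq_zero.mp hN
  have hCD : reflection L C = D := by
    refine reflection_eq_of_midpoint_mem (right_mem_affineSpan_pair ℝ M N) ?_
    rw [hdir, Submodule.mem_orthogonal_singleton_iff_inner_right, ← neg_vsub_eq_vsub_rev,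
      inner_neg_left, neg_eq_zero]
    exact mem_perpBisector_iff_inner_eq_zero.mp hM
  refine ⟨reflection L, hAB, ?_, hCD, ?_⟩
  · rw [← hAB, reflection_reflection]
  · rw [← hCD, reflection_reflection]

end EuclideanAffineSpace

namespace TriCongruent

lemma refl (s : Set (EuclideanSpace ℝ (Fin 3))) : TriCongruent s s :=
  ⟨IsometryEquiv.refl _, Set.image_id s⟩

lemma symm {s t : Set (EuclideanSpace ℝ (Fin 3))} (h : TriCongruent s t) : TriCongruent t s := by
  obtain ⟨f, rfl⟩ := h
  exact ⟨f.symm, f.symm_image_image s⟩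

lemma trans {s t u : Set (EuclideanSpace ℝ (Fin 3))} (hst : TriCongruent s t)
    (htu : TriCongruent t u) : TriCongruent s u := by
  obtain ⟨f, rfl⟩ := hst
  obtain ⟨g, rfl⟩ := htu
  exact ⟨f.trans g, Set.image_comp g f s⟩

lemma of_affineIsometryEquiv (f : EuclideanSpace ℝ (Fin 3) ≃ᵃⁱ[ℝ] EuclideanSpace ℝ (Fin 3))
    {X Y Z : EuclideanSpace ℝ (Fin 3)} {s : Set (EuclideanSpace ℝ (Fin 3))}
    (h : {f X, f Y, f Z} = s) : TriCongruent {X, Y, Z} s :=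
  ⟨f.toIsometryEquiv, by simp [Set.image_insert_eq, h]⟩

end TriCongruent

theorem stmt_1 (A B C D : EuclideanSpace ℝ (Fin 3))
    (hind : AffineIndependent ℝ ![A, B, C, D])
    (h1 : triArea A B C = triArea A B D)
    (h2 : triArea A B C = triArea A C D)
    (h3 : triArea A B C = triArea B C D) :
    ∀ i j : Fin 4,
      TriCongruent
        (![({A, B, C} : Set (EuclideanSpace ℝ (Fin 3))), {A, B, D}, {A, C, D}, {B, C, D}] i)
        (![({A, B, C} : Set (EuclideanSpace ℝ (Fin 3))), {A, B, D}, {A, C, D}, {B, C, D}] j) := by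
  obtain ⟨hAB, hAC, hAD⟩ := dist_eq_dist_of_triArea_eq hind h1 h2 h3
  obtain ⟨f₁, f₁A, f₁B, f₁C, -⟩ := exists_affineIsometryEquiv_swap_of_dist_eq hAC hAD
  obtain ⟨f₂, f₂A, f₂C, f₂B, -⟩ :=
    exists_affineIsometryEquiv_swap_of_dist_eq (B := C) (C := B) hAB (hAD.trans (dist_comm B C))
  obtain ⟨f₃, f₃A, -, f₃B, f₃C⟩ := exists_affineIsometryEquiv_swap_of_dist_eq (B := D) (C := B)
    (hAB.trans (dist_comm C D)) (hAC.trans (dist_comm B D))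
  have hABD : TriCongruent {A, B, C} {A, B, D} := .of_affineIsometryEquiv f₁
    (by rw [f₁A, f₁B, f₁C]; grind)
  have hACD : TriCongruent {A, B, C} {A, C, D} := .of_affineIsometryEquiv f₂
    (by rw [f₂A, f₂B, f₂C]; grind)
  have hBCD : TriCongruent {A, B, C} {B, C, D} := .of_affineIsometryEquiv f₃
    (by rw [f₃A, f₃B, f₃C]; grind)
  have hABC : ∀ i, TriCongruent {A, B, C}
      (![({A, B, C} : Set (EuclideanSpace ℝ (Fin 3))), {A, B, D}, {A, C, D}, {B, C, D}] i) := by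
    intro i
    fin_cases i
    exacts [.refl _, hABD, hACD, hBCD]
  exact fun i j => (hABC i).symm.trans (hABC j)
end

section
/- Let A, B, C, D be four affinely independent points in Euclidean 3-space. The four triangles ABC, ABD, ACD, BCD all have the same area if and only if the opposite edges of the simplex have pairwise equal lengths, i.e., dist A B = dist C D, dist A C = dist B D, and dist A D = dist B C. -/
/-!
Put `u = (C + D - A - B) / 2`, `v = (B + D - A - C) / 2`, `w = (B + C - A - D) / 2`, so that
`B - A = v + w`, `C - A = u + w`, `D - A = u + v`: the simplex is inscribed in the parallelepiped
spanned by `u, v, w`, and each pair of opposite edges consists of the two diagonals `x + y`,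
`x - y` of a face of it. So opposite edges have equal lengths iff `u, v, w` are pairwise
orthogonal.

With `p = v ∧ w`, `q = u ∧ w`, `r = u ∧ v`, the bivectors `(B - A) ∧ (C - A)`, ... of the four
faces are `±(p ± q ± r)`, one for each choice of the two inner signs. Their squared norms are
`‖p‖² + ‖q‖² + ‖r‖² ± 2⟪p, q⟫ ± 2⟪q, r⟫ ± 2⟪r, p⟫`, which agree iff `p, q, r` are pairwise
orthogonal. By Binet–Cauchy this says that the Gram matrix of `u, v, w` has a diagonal adjugate,
hence, being invertible for a nondegenerate simplex, is itself diagonal.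
-/

open scoped InnerProductSpace

section InnerProductSpace

variable {V : Type*} [NormedAddCommGroup V] [InnerProductSpace ℝ V]

-- The inner product `⟪x ∧ y, z ∧ t⟫` of bivectors, by the Binet–Cauchy formula.
def wedgeInner (x y z t : V) : ℝ := ⟪x, z⟫_ℝ * ⟪y, t⟫_ℝ - ⟪x, t⟫_ℝ * ⟪y, z⟫_ℝ

lemma wedgeInner_self_nonneg (x y : V) : 0 ≤ wedgeInner x y x y := by
  rw [wedgeInner, real_inner_comm x y, sub_nonneg]
  exact real_inner_mul_inner_self_le x y

lemma norm_add_eq_norm_sub_iff_inner_eq_zero (x y : V) : ‖x + y‖ = ‖x - y‖ ↔ ⟪x, y⟫_ℝ = 0 :=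
  (InnerProductGeometry.norm_add_eq_norm_sub_iff_angle_eq_pi_div_two x y).trans
    (InnerProductGeometry.inner_eq_zero_iff_angle_eq_pi_div_two x y).symm

lemma inner_self_mul_inner_self_ne_sq_of_linearIndependent {x y : V}
    (h : LinearIndependent ℝ ![x, y]) : ⟪x, x⟫_ℝ * ⟪y, y⟫_ℝ ≠ ⟪x, y⟫_ℝ ^ 2 := by
  have := Matrix.det_gram_ne_zero_iff_linearIndependent.2 h
  rw [Matrix.det_fin_two] at this
  simpa [Matrix.gram_apply, real_inner_comm x y, sq, sub_eq_zero] using this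

lemma wedgeInner_faces_eq_iff (u v w : V) :
    (wedgeInner (v + w) (u + w) (v + w) (u + w) = wedgeInner (v + w) (u + v) (v + w) (u + v) ∧
      wedgeInner (v + w) (u + w) (v + w) (u + w) = wedgeInner (u + w) (u + v) (u + w) (u + v) ∧
      wedgeInner (v + w) (u + w) (v + w) (u + w) = wedgeInner (u - v) (u - w) (u - v) (u - w)) ↔
      (wedgeInner v w u w = 0 ∧ wedgeInner u w u v = 0 ∧ wedgeInner u v v w = 0) := by
  set s := wedgeInner v w v w + wedgeInner u w u w + wedgeInner u v u v
  set X := wedgeInner v w u w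
  set Y := wedgeInner u w u v
  set Z := wedgeInner u v v w
  have hABC : wedgeInner (v + w) (u + w) (v + w) (u + w) = s + 2 * (-X + Y - Z) := by
    simp only [s, X, Y, Z, wedgeInner, inner_add_left, inner_add_right, real_inner_comm]
    ring
  have hABD : wedgeInner (v + w) (u + v) (v + w) (u + v) = s + 2 * (X + Y + Z) := by
    simp only [s, X, Y, Z, wedgeInner, inner_add_left, inner_add_right, real_inner_comm]
    ring
  have hACD : wedgeInner (u + w) (u + v) (u + w) (u + v) = s + 2 * (X - Y - Z) := by
    simp only [s, X, Y, Z, wedgeInner, inner_add_left, inner_add_right, real_inner_comm]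
    ring
  have hBCD : wedgeInner (u - v) (u - w) (u - v) (u - w) = s + 2 * (-X - Y + Z) := by
    simp only [s, X, Y, Z, wedgeInner, inner_sub_left, inner_sub_right, real_inner_comm]
    ring
  rw [hABC, hABD, hACD, hBCD]
  constructor
  · rintro ⟨h₁, h₂, h₃⟩
    refine ⟨by linarith, by linarith, by linarith⟩
  · rintro ⟨hX, hY, hZ⟩
    simp only [hX, hY, hZ]
    norm_num

-- The hypotheses say that the adjugate of the Gram matrix `!![a, γ, β; γ, b, α; β, α, c]` is
-- diagonal.
lemma eq_zero_of_cofactors_eq_zero {a b c α β γ : ℝ} (ha : a ≠ 0) (hb : b ≠ 0) (hc : c ≠ 0)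
    (hac : a * c ≠ β ^ 2) (hX : γ * c - α * β = 0) (hY : a * α - γ * β = 0)
    (hZ : γ * α - β * b = 0) : α = 0 ∧ β = 0 ∧ γ = 0 := by
  have hβ : β = 0 := by
    have : β * ((a * c - β ^ 2) * b) = 0 := by
      linear_combination (β * γ) * hX + (γ * c) * hY + (β ^ 2 - a * c) * hZ
    simpa [hac, hb, sub_eq_zero] using this
  have hγ : γ = 0 := by simpa [hβ, hc] using hX
  have hα : α = 0 := by simpa [hβ, ha] using hY
  exact ⟨hα, hβ, hγ⟩

lemma wedgeInner_eq_zero_iff_inner_eq_zero {u v w : V} (h : LinearIndependent ℝ ![u, v, w]) :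
    (wedgeInner v w u w = 0 ∧ wedgeInner u w u v = 0 ∧ wedgeInner u v v w = 0) ↔
      (⟪v, w⟫_ℝ = 0 ∧ ⟪u, w⟫_ℝ = 0 ∧ ⟪u, v⟫_ℝ = 0) := by
  refine ⟨fun ⟨hX, hY, hZ⟩ ↦ ?_, fun ⟨hα, hβ, hγ⟩ ↦ ?_⟩
  · have hne (i : Fin 3) : ⟪![u, v, w] i, ![u, v, w] i⟫_ℝ ≠ 0 :=
      inner_self_ne_zero.2 (h.ne_zero i)
    have huw : LinearIndependent ℝ ![u, w] := by
      convert h.comp ![0, 2] (by decide) using 1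
      ext i; fin_cases i <;> rfl
    simp only [wedgeInner, real_inner_comm u v, real_inner_comm u w, real_inner_comm v w]
      at hX hY hZ
    exact eq_zero_of_cofactors_eq_zero (hne 0) (hne 1) (hne 2)
      (inner_self_mul_inner_self_ne_sq_of_linearIndependent huw) hX hY hZ
  · simp [wedgeInner, real_inner_comm u v, real_inner_comm u w, real_inner_comm v w, hα, hβ, hγ]

end InnerProductSpace

lemma AffineIndependent.linearIndependent_of_sub_eq {V : Type*} [AddCommGroup V] [Module ℝ V]
    {A B C D u v w : V} (h : AffineIndependent ℝ ![A, B, C, D]) (hB : B - A = v + w)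
    (hC : C - A = u + w) (hD : D - A = u + v) : LinearIndependent ℝ ![u, v, w] := by
  obtain rfl := eq_add_of_sub_eq hB
  obtain rfl := eq_add_of_sub_eq hC
  obtain rfl := eq_add_of_sub_eq hD
  rw [Fintype.linearIndependent_iff]
  intro g hg
  simp only [Fin.sum_univ_three, Matrix.cons_val_zero, Matrix.cons_val_one, Matrix.cons_val_two,
    Matrix.head_cons, Matrix.tail_cons] at hg
  set p := g 0
  set q := g 1
  set r := g 2
  have hw := h.eq_zero_of_sum_eq_zero (s := Finset.univ)
    (w := ![-p - q - r, -p + q + r, p - q + r, p + q - r])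
    (by simp only [Fin.sum_univ_four, Matrix.cons_val_zero, Matrix.cons_val_one, Matrix.cons_val_two,
          Matrix.cons_val_three, Matrix.head_cons, Matrix.tail_cons]
        ring)
    (by simp only [Fin.sum_univ_four, Matrix.cons_val_zero, Matrix.cons_val_one, Matrix.cons_val_two,
          Matrix.cons_val_three, Matrix.head_cons, Matrix.tail_cons]
        linear_combination (norm := module) (2 : ℝ) • hg)
  have h₀ : -p - q - r = 0 := hw 0 (Finset.mem_univ _)
  have h₁ : -p + q + r = 0 := hw 1 (Finset.mem_univ _)
  have h₂ : p - q + r = 0 := hw 2 (Finset.mem_univ _)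
  have h₃ : p + q - r = 0 := hw 3 (Finset.mem_univ _)
  intro i
  fin_cases i
  exacts [show p = 0 by linarith, show q = 0 by linarith, show r = 0 by linarith]

lemma two_mul_triArea (X Y Z : EuclideanSpace ℝ (Fin 3)) :
    2 * triArea X Y Z = √(wedgeInner (Y - X) (Z - X) (Y - X) (Z - X)) := by
  rw [triArea, dist_eq_norm', dist_eq_norm', EuclideanGeometry.angle, vsub_eq_sub, vsub_eq_sub,
    wedgeInner, real_inner_comm (Y - X) (Z - X), ← InnerProductGeometry.sin_angle_mul_norm_mul_norm]
  ring

lemma triArea_eq_triArea_iff (X Y Z P Q R : EuclideanSpace ℝ (Fin 3)) :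
    triArea X Y Z = triArea P Q R ↔
      wedgeInner (Y - X) (Z - X) (Y - X) (Z - X) = wedgeInner (Q - P) (R - P) (Q - P) (R - P) := by
  rw [← mul_right_inj' two_ne_zero, two_mul_triArea, two_mul_triArea,
    Real.sqrt_inj (wedgeInner_self_nonneg _ _) (wedgeInner_self_nonneg _ _)]

theorem stmt_4 (A B C D : EuclideanSpace ℝ (Fin 3))
    (hind : AffineIndependent ℝ ![A, B, C, D]) :
    (triArea A B C = triArea A B D ∧ triArea A B C = triArea A C D ∧
        triArea A B C = triArea B C D) ↔
      (dist A B = dist C D ∧ dist A C = dist B D ∧ dist A D = dist B C) := by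
  set u := (2 : ℝ)⁻¹ • (C + D - A - B)
  set v := (2 : ℝ)⁻¹ • (B + D - A - C)
  set w := (2 : ℝ)⁻¹ • (B + C - A - D)
  have hBA : B - A = v + w := by module
  have hCA : C - A = u + w := by module
  have hDA : D - A = u + v := by module
  have hCB : C - B = u - v := by module
  have hDB : D - B = u - w := by module
  have hDC : D - C = v - w := by module
  simp only [triArea_eq_triArea_iff, dist_eq_norm', hBA, hCA, hDA, hCB, hDB, hDC]
  rw [wedgeInner_faces_eq_iff, wedgeInner_eq_zero_iff_inner_eq_zero
      (hind.linearIndependent_of_sub_eq hBA hCA hDA),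
    norm_add_eq_norm_sub_iff_inner_eq_zero, norm_add_eq_norm_sub_iff_inner_eq_zero,
    norm_add_eq_norm_sub_iff_inner_eq_zero]
end

section
/- There do not exist four points A, B, C, D in Euclidean 3-space, with A, B, C pairwise distinct (equivalently with a = dist B C > 0, b = dist C A > 0, c = dist A B > 0), such that the four triangles ABC, ABD, ACD, BCD all have the same area S > 0 and simultaneously (dist A D)² = 2b² + 2c² − a², (dist B D)² = 2a² + 2c² − b², and (dist C D)² = 2a² + 2b² − c². -/
/-! Heron's formula expresses `16 S²` through the squared side lengths `p, q, r` of a triangle as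
`2(pq + qr + rp) - p² - q² - r²`. Under the relations of Solution 8 the faces `ABD`, `ACD`, `BCD`
having the area of `ABC` become three polynomial equations in `a², b², c²`, which force
`b² = c²` or `a² = b² + c²`; either way the remaining equation makes a side degenerate. -/

def heronForm (p q r : ℝ) : ℝ :=
  2 * (p * q + q * r + r * p) - p ^ 2 - q ^ 2 - r ^ 2

theorem sixteen_mul_triArea_sq (X Y Z : EuclideanSpace ℝ (Fin 3)) :
    16 * triArea X Y Z ^ 2 = heronForm (dist X Y ^ 2) (dist X Z ^ 2) (dist Y Z ^ 2) := by
  have hcos := EuclideanGeometry.law_cos Y X Z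
  have hpyth := Real.sin_sq_add_cos_sq (EuclideanGeometry.angle Y X Z)
  rw [dist_comm Y X, dist_comm Z X] at hcos
  unfold triArea heronForm
  linear_combination 4 * dist X Y ^ 2 * dist X Z ^ 2 * hpyth
    - (dist X Y ^ 2 + dist X Z ^ 2 - dist Y Z ^ 2
        + 2 * dist X Y * dist X Z * Real.cos (EuclideanGeometry.angle Y X Z)) * hcos

theorem mul_mul_eq_zero_of_heronForm_eq {p q r : ℝ}
    (hABD : heronForm r (2 * q + 2 * r - p) (2 * p + 2 * r - q) = heronForm r q p)
    (hACD : heronForm q (2 * q + 2 * r - p) (2 * p + 2 * q - r) = heronForm r q p)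
    (hBCD : heronForm p (2 * p + 2 * r - q) (2 * p + 2 * q - r) = heronForm r q p) :
    p * q * r = 0 := by
  unfold heronForm at hABD hACD hBCD
  have hr : (q - p) ^ 2 = r ^ 2 := by linear_combination -hABD / 8
  have hq : (p - r) ^ 2 = q ^ 2 := by linear_combination -hACD / 8
  have hp : (q - r) ^ 2 = p ^ 2 := by linear_combination -hBCD / 8
  have key : (q - r) * (q + r - p) = 0 := by linear_combination (hr - hq) / 2
  rcases mul_eq_zero.1 key with hqr | hpqr
  · have : p ^ 2 = 0 := by linear_combination -hp + (q - r) * hqr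
    simp [pow_eq_zero_iff two_ne_zero |>.1 this]
  · have : q * r = 0 := by linear_combination -hp / 4 + (q + r + p) / 4 * hpqr
    rw [mul_assoc, this, mul_zero]

theorem stmt_11 :
    ¬ ∃ (A B C D : EuclideanSpace ℝ (Fin 3)) (S : ℝ),
      A ≠ B ∧ B ≠ C ∧ A ≠ C ∧ 0 < S ∧
      triArea A B C = S ∧ triArea A B D = S ∧
      triArea A C D = S ∧ triArea B C D = S ∧
      (dist A D) ^ 2 = 2 * (dist C A) ^ 2 + 2 * (dist A B) ^ 2 - (dist B C) ^ 2 ∧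
      (dist B D) ^ 2 = 2 * (dist B C) ^ 2 + 2 * (dist A B) ^ 2 - (dist C A) ^ 2 ∧
      (dist C D) ^ 2 = 2 * (dist B C) ^ 2 + 2 * (dist C A) ^ 2 - (dist A B) ^ 2 := by
  rintro ⟨A, B, C, D, S, hAB, hBC, hAC, -, hABC, hABD, hACD, hBCD, hAD, hBD, hCD⟩
  have area (X Y Z : EuclideanSpace ℝ (Fin 3)) (h : triArea X Y Z = S) :
      heronForm (dist X Y ^ 2) (dist X Z ^ 2) (dist Y Z ^ 2) = 16 * S ^ 2 := by
    rw [← sixteen_mul_triArea_sq, h]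
  have hABC' := area A B C hABC
  have hABD' := area A B D hABD
  have hACD' := area A C D hACD
  have hBCD' := area B C D hBCD
  rw [dist_comm A C] at hABC' hACD'
  rw [hAD, hBD] at hABD'
  rw [hAD, hCD] at hACD'
  rw [hBD, hCD] at hBCD'
  have hdeg := mul_mul_eq_zero_of_heronForm_eq
    (hABD'.trans hABC'.symm) (hACD'.trans hABC'.symm) (hBCD'.trans hABC'.symm)
  simp only [mul_eq_zero, pow_eq_zero_iff two_ne_zero, dist_eq_zero] at hdeg
  rcases hdeg with (rfl | rfl) | rfl
  exacts [hBC rfl, hAC rfl, hAB rfl]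
end
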